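/- arXiv:1810.07627 — 5 statements merged into one kernel-verified Lean document; each statement's English description precedes it below -/
import Mathlib

section
/- In the enhanced power graph of a group G (vertices are elements of G, two distinct elements adjacent iff they lie in a common cyclic subgroup), any maximal clique is either a cyclic subgroup or a locally cyclic subgroup of G. -/
/-!
Any two elements of a clique lie in a common cyclic subgroup, so they commute, and a finite clique
`S` generates a finitely generated abelian group `B`. It is cyclic: every finite quotient `Q` of `B`
is generated by the image of `S`, so each `Q ⧸ Qᵖ` is generated by pairwise cyclic elements of
exponent `p` and therefore has order at most `p`; this forces `x ^ n = 1` to have at most `n`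
solutions in `Q`, so `Q` is cyclic; and a finitely generated abelian group whose finite quotients
are all cyclic is `ℤ` or finite cyclic by the structure theorem. Hence in a maximal clique `s`
every element generated by finitely many elements of `s` lies in a common cyclic subgroup with
every element of `s`, so it belongs to `s` by maximality: `s` is a subgroup whose finitely generated
subgroups are cyclic.
-/

open SimpleGraph

/-- The enhanced power graph of a group. -/
def enhancedPowerGraph (G : Type*) [Group G] : SimpleGraph G where
  Adj x y := x ≠ y ∧ ∃ z : G, x ∈ Subgroup.zpowers z ∧ y ∈ Subgroup.zpowers z
  symm := ⟨by rintro x y ⟨h, z, hx, hy⟩; exact ⟨h.symm, z, hy, hx⟩⟩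
  loopless := ⟨by rintro x ⟨h, -⟩; exact h rfl⟩

/-- The (undirected) power graph of a group. -/
def powerGraph (G : Type*) [Group G] : SimpleGraph G where
  Adj x y := x ≠ y ∧ (x ∈ Subgroup.zpowers y ∨ y ∈ Subgroup.zpowers x)
  symm := ⟨by rintro x y ⟨h, hz⟩; exact ⟨h.symm, hz.symm⟩⟩
  loopless := ⟨by rintro x ⟨h, -⟩; exact h rfl⟩

/-- The strong product of two simple graphs. -/
def strongProd {α β : Type*} (Γ : SimpleGraph α) (Δ : SimpleGraph β) :
    SimpleGraph (α × β) where
  Adj p q := (p.1 = q.1 ∧ Δ.Adj p.2 q.2) ∨ (Γ.Adj p.1 q.1 ∧ p.2 = q.2) ∨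
    (Γ.Adj p.1 q.1 ∧ Δ.Adj p.2 q.2)
  symm := ⟨by
    rintro ⟨a, b⟩ ⟨c, d⟩ (⟨h1, h2⟩ | ⟨h1, h2⟩ | ⟨h1, h2⟩)
    · exact Or.inl ⟨h1.symm, h2.symm⟩
    · exact Or.inr (Or.inl ⟨h1.symm, h2.symm⟩)
    · exact Or.inr (Or.inr ⟨h1.symm, h2.symm⟩)⟩
  loopless := ⟨by
    rintro ⟨a, b⟩ (⟨-, h⟩ | ⟨h, -⟩ | ⟨h, -⟩) <;> exact h.ne rfl⟩

/-- The automorphism group of a simple graph, as a subgroup of permutations. -/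
def graphAut {V : Type*} (Γ : SimpleGraph V) : Subgroup (Equiv.Perm V) where
  carrier := {σ | ∀ x y, Γ.Adj (σ x) (σ y) ↔ Γ.Adj x y}
  one_mem' := fun _ _ => Iff.rfl
  mul_mem' := by
    intro σ τ hσ hτ x y
    simpa [Equiv.Perm.mul_apply] using (hσ (τ x) (τ y)).trans (hτ x y)
  inv_mem' := by
    intro σ hσ x y
    simpa using (hσ (σ⁻¹ x) (σ⁻¹ y)).symm

/-- A subgroup is maximal cyclic if it is maximal among cyclic subgroups. -/
def IsMaxCyclic {G : Type*} [Group G] (C : Subgroup G) : Prop :=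
  Maximal (fun K : Subgroup G => ∃ g : G, K = Subgroup.zpowers g) C

/-- The closed neighborhood of a vertex. -/
def closedNbhd {V : Type*} (Γ : SimpleGraph V) (x : V) : Set V :=
  Γ.neighborSet x ∪ {x}

/-- A subgroup is locally cyclic if all its finitely generated subgroups are cyclic. -/
def IsLocallyCyclicSubgroup {G : Type*} [Group G] (H : Subgroup G) : Prop :=
  ∀ K : Subgroup G, K ≤ H → K.FG → IsCyclic K

open Subgroup

def PairwiseCyclic {G : Type*} [Group G] (S : Set G) : Prop :=
  ∀ x ∈ S, ∀ y ∈ S, ∃ z : G, x ∈ zpowers z ∧ y ∈ zpowers z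

theorem isClique_enhancedPowerGraph_iff {G : Type*} [Group G] {S : Set G} :
    (enhancedPowerGraph G).IsClique S ↔ PairwiseCyclic S := by
  refine ⟨fun h x hx y hy => ?_, fun h x hx y hy hxy => ⟨hxy, h x hx y hy⟩⟩
  by_cases hxy : x = y
  · exact ⟨x, mem_zpowers x, hxy ▸ mem_zpowers x⟩
  · exact (h hx hy hxy).2

namespace PairwiseCyclic

variable {G H : Type*} [Group G] [Group H] {S : Set G}

theorem mono {T : Set G} (hS : PairwiseCyclic S) (hT : T ⊆ S) : PairwiseCyclic T :=
  fun x hx y hy => hS x (hT hx) y (hT hy)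

theorem mul_comm (hS : PairwiseCyclic S) : ∀ x ∈ S, ∀ y ∈ S, x * y = y * x := by
  intro x hx y hy
  obtain ⟨z, ⟨i, rfl⟩, ⟨j, rfl⟩⟩ := hS x hx y hy
  exact zpow_mul_comm z i j

theorem image (hS : PairwiseCyclic S) (f : G →* H) : PairwiseCyclic (f '' S) := by
  rintro _ ⟨x, hx, rfl⟩ _ ⟨y, hy, rfl⟩
  obtain ⟨z, hxz, hyz⟩ := hS x hx y hy
  exact ⟨f z, by simpa only [← MonoidHom.map_zpowers] using mem_map_of_mem f hxz,
    by simpa only [← MonoidHom.map_zpowers] using mem_map_of_mem f hyz⟩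

/-- The common cyclic overgroup of `x` and `y` can be shrunk to `closure {x, y} ≤ K`. -/
theorem preimage_subtype (hS : PairwiseCyclic S) (K : Subgroup G) :
    PairwiseCyclic (((↑) : K → G) ⁻¹' S) := by
  intro x hx y hy
  obtain ⟨z, hxz, hyz⟩ := hS x hx y hy
  have : IsCyclic (closure {(x : G), (y : G)}) := isCyclic_of_le
    ((closure_le _).mpr (Set.insert_subset hxz (Set.singleton_subset_iff.mpr hyz)))
  obtain ⟨w, hw⟩ := (closure {(x : G), (y : G)}).isCyclic_iff_exists_zpowers_eq_top.mp this
  have hwK : w ∈ K :=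
    (closure_le K).mpr (Set.insert_subset x.2 (Set.singleton_subset_iff.mpr y.2))
      (hw ▸ mem_zpowers w)
  have mem (u : K) (hu : (u : G) ∈ ({(x : G), (y : G)} : Set G)) :
      u ∈ zpowers ⟨w, hwK⟩ := by
    rw [← mem_map_iff_mem K.subtype_injective, MonoidHom.map_zpowers]
    exact hw ▸ subset_closure hu
  exact ⟨⟨w, hwK⟩, mem x (by simp), mem y (by simp)⟩

end PairwiseCyclic

theorem zpowers_eq_of_pow_prime_eq_one {G : Type*} [Group G] {p : ℕ} (hp : p.Prime) {x w : G}
    (hw : w ^ p = 1) (hx : x ≠ 1) (hxw : x ∈ zpowers w) : zpowers x = zpowers w := by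
  have hwp : orderOf w ∣ p := orderOf_dvd_of_pow_eq_one hw
  have hxp : orderOf x = p := (hp.eq_one_or_self_of_dvd _
    ((orderOf_dvd_of_mem_zpowers hxw).trans hwp)).resolve_left (orderOf_eq_one_iff.not.mpr hx)
  have hcard : Nat.card (zpowers w) ≤ Nat.card (zpowers x) := by
    rw [Nat.card_zpowers, Nat.card_zpowers, hxp]
    exact Nat.le_of_dvd hp.pos hwp
  have : Finite (zpowers w) := Nat.finite_of_card_ne_zero (by
    rw [Nat.card_zpowers]; exact ne_zero_of_dvd_ne_zero hp.ne_zero hwp)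
  exact eq_of_le_of_card_ge (zpowers_le.mpr hxw) hcard

/-- Any nontrivial element of `S` already generates `Q`. -/
theorem card_le_of_closure_eq_top_of_pow_eq_one {Q : Type*} [Group Q] {S : Set Q}
    (hgen : closure S = ⊤) (hS : PairwiseCyclic S) {p : ℕ} (hp : p.Prime)
    (hQ : ∀ g : Q, g ^ p = 1) : Nat.card Q ≤ p := by
  obtain ⟨x, hx⟩ : ∃ x : Q, S ⊆ zpowers x := by
    by_cases hS1 : S ⊆ {1}
    · exact ⟨1, fun y hy => by rw [hS1 hy]; exact one_mem _⟩
    obtain ⟨x, hxS, hx1⟩ := Set.not_subset.mp hS1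
    refine ⟨x, fun y hy => ?_⟩
    obtain ⟨z, hxz, hyz⟩ := hS x hxS y hy
    exact zpowers_eq_of_pow_prime_eq_one hp (hQ z) hx1 hxz ▸ hyz
  have htop : zpowers x = ⊤ := top_le_iff.mp (hgen ▸ (closure_le _).mpr hx)
  rw [← orderOf_eq_card_of_zpowers_eq_top htop]
  exact orderOf_le_of_pow_eq_one hp.pos (hQ x)

theorem card_ker_powMonoidHom_mul_le {B : Type*} [CommGroup B] [Finite B] (a b : ℕ) :
    Nat.card (powMonoidHom (a * b) : B →* B).ker ≤
      Nat.card (powMonoidHom a : B →* B).ker * Nat.card (powMonoidHom b : B →* B).ker := by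
  let φ := (powMonoidHom b : B →* B).domRestrict (powMonoidHom (a * b) : B →* B).ker
  have hrange : φ.range ≤ (powMonoidHom a).ker := by
    rintro _ ⟨x, rfl⟩
    have hx : (x : B) ^ (a * b) = 1 := x.2
    rw [MonoidHom.mem_ker]
    simp only [φ, MonoidHom.domRestrict_apply, powMonoidHom_apply, ← pow_mul]
    rwa [Nat.mul_comm b a]
  have hker : Nat.card φ.ker ≤ Nat.card (powMonoidHom b : B →* B).ker :=
    Nat.card_le_card_of_injective (fun x => ⟨x.1.1, x.2⟩) fun x y h =>
      Subtype.ext (Subtype.ext (congrArg Subtype.val h :))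
  calc Nat.card (powMonoidHom (a * b) : B →* B).ker
      = Nat.card φ.ker * Nat.card φ.range := by rw [← index_ker, card_mul_index]
    _ ≤ _ := by rw [mul_comm]; exact Nat.mul_le_mul (card_le_of_le hrange) hker

theorem card_ker_powMonoidHom_le {B : Type*} [CommGroup B] [Finite B]
    (h : ∀ p : ℕ, p.Prime → Nat.card (powMonoidHom p : B →* B).ker ≤ p) {n : ℕ}
    (hn : 0 < n) :
    Nat.card (powMonoidHom n : B →* B).ker ≤ n := by
  induction n using induction_on_primes with
  | zero => exact absurd hn (lt_irrefl 0)
  | one => simp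
  | prime_mul p a hp ih =>
    calc Nat.card (powMonoidHom (p * a) : B →* B).ker
        ≤ Nat.card (powMonoidHom p : B →* B).ker * Nat.card (powMonoidHom a : B →* B).ker :=
          card_ker_powMonoidHom_mul_le p a
      _ ≤ p * a := Nat.mul_le_mul (h p hp) (ih (Nat.pos_of_mul_pos_left hn))

theorem isCyclic_of_index_range_powMonoidHom_le {B : Type*} [CommGroup B] [Finite B]
    (h : ∀ p : ℕ, p.Prime → (powMonoidHom p : B →* B).range.index ≤ p) : IsCyclic B := by
  classical
  have := Fintype.ofFinite B
  refine isCyclic_of_card_pow_eq_one_le fun n hn => ?_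
  calc Finset.card {a : B | a ^ n = 1} = Nat.card (powMonoidHom n : B →* B).ker := by
        rw [← Fintype.card_subtype, ← Nat.card_eq_fintype_card]; rfl
    _ ≤ n := card_ker_powMonoidHom_le
      (fun p hp => index_range (G := B) (f := powMonoidHom p) ▸ h p hp) hn

theorem isCyclic_pi_int_prod_of_forall_surjective {j T : Type} [Finite j] [CommGroup T]
    [Finite T]
    (h : ∀ (Q : Type) [Group Q] [Finite Q] (f : (j → Multiplicative ℤ) × T →* Q),
      Function.Surjective f → IsCyclic Q) :
    IsCyclic ((j → Multiplicative ℤ) × T) := by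
  classical
  rcases isEmpty_or_nonempty j with hj | ⟨⟨a⟩⟩
  · have : Finite (j → Multiplicative ℤ) := Finite.of_subsingleton
    exact h _ (MonoidHom.id _) Function.surjective_id
  let red (m : ℕ) : Multiplicative ℤ →* Multiplicative (ZMod m) :=
    AddMonoidHom.toMultiplicative (Int.castAddHom (ZMod m))
  have red_surjective (m : ℕ) : Function.Surjective (red m) := ZMod.intCast_surjective
  let eval (b : j) : (j → Multiplicative ℤ) →* Multiplicative ℤ := Pi.evalMonoidHom _ b
  have : Unique T := by
    have : NeZero (Nat.card T) := ⟨Nat.card_pos.ne'⟩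
    let f : (j → Multiplicative ℤ) × T →* Multiplicative (ZMod (Nat.card T)) × T :=
      ((red _).comp (eval a)).prodMap (MonoidHom.id T)
    have hf : Function.Surjective f := Prod.map_surjective.mpr
      ⟨(red_surjective _).comp fun x => ⟨fun _ => x, rfl⟩, Function.surjective_id⟩
    have := h _ f hf
    have hT : Nat.card T = 1 := by
      simpa [Nat.card_zmod] using
        coprime_card_of_isCyclic_prod (Multiplicative (ZMod (Nat.card T))) T
    exact ⟨⟨1⟩, fun t => (Nat.card_eq_one_iff_unique.mp hT).1.elim t 1⟩
  have : Unique j := by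
    refine ⟨⟨a⟩, fun b => by_contra fun hba => ?_⟩
    let f :
        (j → Multiplicative ℤ) × T →* Multiplicative (ZMod 2) × Multiplicative (ZMod 2) :=
      (((red 2).comp (eval b)).prod ((red 2).comp (eval a))).comp (MonoidHom.fst _ _)
    have hf : Function.Surjective f := by
      rintro ⟨u, v⟩
      obtain ⟨u, rfl⟩ := red_surjective 2 u
      obtain ⟨v, rfl⟩ := red_surjective 2 v
      exact ⟨(Function.update (fun _ => v) b u, 1), by
        simp [f, eval, Function.update_of_ne (Ne.symm hba : a ≠ b)]⟩
    have := h _ f hf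
    simpa [Nat.card_zmod] using
      coprime_card_of_isCyclic_prod (Multiplicative (ZMod 2)) (Multiplicative (ZMod 2))
  exact (MulEquiv.prodUnique.trans (MulEquiv.piUnique _)).isCyclic.mpr inferInstance

theorem isCyclic_of_surjective_of_forall_finiteIndex {B Q : Type*} [CommGroup B] [Group Q]
    [Finite Q] (h : ∀ N : Subgroup B, N.FiniteIndex → IsCyclic (B ⧸ N)) (f : B →* Q)
    (hf : Function.Surjective f) : IsCyclic Q :=
  have := h f.ker inferInstance
  isCyclic_of_surjective (QuotientGroup.quotientKerEquivOfSurjective f hf)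
    (QuotientGroup.quotientKerEquivOfSurjective f hf).surjective

theorem isCyclic_of_forall_finiteIndex {B : Type*} [CommGroup B] [Group.FG B]
    (h : ∀ N : Subgroup B, N.FiniteIndex → IsCyclic (B ⧸ N)) : IsCyclic B := by
  obtain ⟨ι, j, _, _, p, hp, e, ⟨φ⟩⟩ :=
    CommGroup.equiv_free_prod_prod_multiplicative_zmod B
  have : ∀ i, NeZero (p i ^ e i) := fun i => ⟨pow_ne_zero _ (hp i).ne_zero⟩
  exact φ.isCyclic.mpr <| isCyclic_pi_int_prod_of_forall_surjective fun _ _ _ f hf =>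
    isCyclic_of_surjective_of_forall_finiteIndex h (f.comp φ.toMonoidHom) (hf.comp φ.surjective)

theorem QuotientGroup.pow_eq_one_of_range_powMonoidHom {B : Type*} [CommGroup B] (p : ℕ)
    (g : B ⧸ (powMonoidHom p : B →* B).range) : g ^ p = 1 := by
  induction g using QuotientGroup.induction_on with
  | H b => exact (QuotientGroup.eq_one_iff _).mpr ⟨b, rfl⟩

open scoped IsMulCommutative in
theorem isCyclic_closure_of_pairwiseCyclic {G : Type*} [Group G] {S : Set G} (hfin : S.Finite)
    (hS : PairwiseCyclic S) : IsCyclic (closure S) := by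
  have := isMulCommutative_closure hS.mul_comm
  have : Group.FG (closure S) :=
    (Group.fg_iff_subgroup_fg _).mpr ((fg_iff _).mpr ⟨S, rfl, hfin⟩)
  refine isCyclic_of_forall_finiteIndex fun N _ => isCyclic_of_index_range_powMonoidHom_le
    fun p hp => card_le_of_closure_eq_top_of_pow_eq_one ?_
      ((hS.preimage_subtype _).image (f := (QuotientGroup.mk' _).comp (QuotientGroup.mk' N))) hp
      (QuotientGroup.pow_eq_one_of_range_powMonoidHom p)
  rw [← MonoidHom.map_closure, closure_closure_coe_preimage, map_top_of_surjective]
  exact (QuotientGroup.mk'_surjective _).comp (QuotientGroup.mk'_surjective N)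

theorem closure_subset_of_maximal_isClique {G : Type*} [Group G] {s : Set G}
    (hs : Maximal (enhancedPowerGraph G).IsClique s) {T : Set G} (hT : T ⊆ s) (hfin : T.Finite) :
    (closure T : Set G) ⊆ s := by
  intro u hu
  have hpair : PairwiseCyclic s := isClique_enhancedPowerGraph_iff.mp hs.prop
  have key : ∀ c ∈ s, ∃ z, u ∈ zpowers z ∧ c ∈ zpowers z := by
    intro c hc
    obtain ⟨z, hz⟩ := (closure (insert c T)).isCyclic_iff_exists_zpowers_eq_top.mp
      (isCyclic_closure_of_pairwiseCyclic (hfin.insert c) (hpair.mono (Set.insert_subset hc hT)))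
    exact ⟨z, hz ▸ closure_mono (Set.subset_insert c T) hu,
      hz ▸ subset_closure (Set.mem_insert c T)⟩
  refine hs.mem_of_prop_insert (isClique_enhancedPowerGraph_iff.mpr ?_)
  rintro x (rfl | hx) y (rfl | hy)
  · exact ⟨_, mem_zpowers _, mem_zpowers _⟩
  · exact key y hy
  · exact (key x hx).imp fun _ => And.symm
  · exact hpair x hx y hy

theorem stmt_0 {G : Type*} [Group G] (s : Set G)
    (hs : Maximal (enhancedPowerGraph G).IsClique s) :
    ∃ H : Subgroup G, s = (H : Set G) ∧ (IsCyclic ↥H ∨ IsLocallyCyclicSubgroup H) := by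
  have hcl {T : Set G} (hT : T ⊆ s) (hfin : T.Finite) : (closure T : Set G) ⊆ s :=
    closure_subset_of_maximal_isClique hs hT hfin
  let H : Subgroup G :=
    { carrier := s
      one_mem' := hcl (Set.empty_subset s) Set.finite_empty (one_mem _)
      mul_mem' := fun {a b} ha hb => hcl (Set.insert_subset ha (Set.singleton_subset_iff.mpr hb))
        (Set.toFinite _) (mul_mem (subset_closure (by simp)) (subset_closure (by simp)))
      inv_mem' := fun {a} ha => hcl (Set.singleton_subset_iff.mpr ha) (Set.toFinite _)
        (inv_mem (subset_closure rfl)) }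
  refine ⟨H, rfl, Or.inr fun K hKH ⟨T, hT⟩ => hT ▸ ?_⟩
  have hTs : (T : Set G) ⊆ s := (hT ▸ subset_closure : (T : Set G) ⊆ K).trans hKH
  exact isCyclic_closure_of_pairwiseCyclic T.finite_toSet
    ((isClique_enhancedPowerGraph_iff.mp hs.prop).mono hTs)
end

section
/- For torsion groups G and H, the enhanced power graph of the direct product G × H equals the strong product of the enhanced power graphs of G and H if and only if gcd(o(g), o(h)) = 1 for all g ∈ G and h ∈ H. -/
open SimpleGraph

/-!
Under the coprimality condition, `(a, b)` generates the whole product `⟨a⟩ × ⟨b⟩`, since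
suitable powers of `(a, b)` are `(a, 1)` and `(1, b)`. Hence `(x₁, y₁)` and `(x₂, y₂)` lie in a
common cyclic subgroup iff `x₁, x₂` do and `y₁, y₂` do, which is exactly strong-product adjacency
once equal vertices are allowed. Conversely, if `(g, 1)` and `(1, h)` are both powers of `(a, b)`,
say with exponents `i` and `j`, then `o(b) ∣ i` and `o(a) ∣ j`, so `o(g)` and `o(h)` divide the
coprime numbers `o(a) / d` and `o(b) / d`, where `d = gcd(o(a), o(b))`.
-/

open Subgroup

section Orders

variable {G H : Type*} [Group G] [Group H]

lemma orderOf_zpow_dvd_div_gcd (a : G) {m : ℕ} {i : ℤ} (hi : (m : ℤ) ∣ i) :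
    orderOf (a ^ i) ∣ orderOf a / (orderOf a).gcd m := by
  rcases eq_or_ne m 0 with rfl | hm
  · simp_all
  obtain ⟨k, rfl⟩ := hi
  rw [zpow_mul, zpow_natCast, ← orderOf_pow' a hm]
  exact orderOf_dvd_of_mem_zpowers (zpow_mem_zpowers _ k)

lemma Prod.mk_one_mem_zpowers {a : G} {b : H} (h : (orderOf a).Coprime (orderOf b)) :
    (a, (1 : H)) ∈ zpowers (a, b) := by
  obtain ⟨k, hk⟩ := exists_pow_eq_self_of_coprime h.symm
  have hpow : (a, (1 : H)) = ((a, b) ^ orderOf b) ^ k := by simp [hk]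
  rw [hpow]
  exact pow_mem (pow_mem (mem_zpowers _) _) _

lemma Prod.one_mk_mem_zpowers {a : G} {b : H} (h : (orderOf a).Coprime (orderOf b)) :
    ((1 : G), b) ∈ zpowers (a, b) := by
  obtain ⟨k, hk⟩ := exists_pow_eq_self_of_coprime h
  have hpow : ((1 : G), b) = ((a, b) ^ orderOf a) ^ k := by simp [hk]
  rw [hpow]
  exact pow_mem (pow_mem (mem_zpowers _) _) _

lemma Prod.mk_mem_zpowers_of_coprime {a x : G} {b y : H}
    (h : (orderOf a).Coprime (orderOf b)) (hx : x ∈ zpowers a) (hy : y ∈ zpowers b) :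
    (x, y) ∈ zpowers (a, b) := by
  obtain ⟨i, rfl⟩ := hx
  obtain ⟨j, rfl⟩ := hy
  have hsplit : (a ^ i, b ^ j) = (a, (1 : H)) ^ i * ((1 : G), b) ^ j := by simp
  rw [hsplit]
  exact mul_mem (zpow_mem (Prod.mk_one_mem_zpowers h) i) (zpow_mem (Prod.one_mk_mem_zpowers h) j)

lemma Prod.fst_mem_zpowers {p z : G × H} (hp : p ∈ zpowers z) : p.1 ∈ zpowers z.1 := by
  obtain ⟨i, rfl⟩ := hp
  exact ⟨i, rfl⟩

lemma Prod.snd_mem_zpowers {p z : G × H} (hp : p ∈ zpowers z) : p.2 ∈ zpowers z.2 := by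
  obtain ⟨i, rfl⟩ := hp
  exact ⟨i, rfl⟩

lemma coprime_orderOf_of_mem_zpowers {g : G} {h : H} {z : G × H}
    (hg : (g, (1 : H)) ∈ zpowers z) (hh : ((1 : G), h) ∈ zpowers z) :
    (orderOf g).Coprime (orderOf h) := by
  obtain ⟨i, hi⟩ := hg
  obtain ⟨j, hj⟩ := hh
  simp only [Prod.ext_iff, Prod.pow_fst, Prod.pow_snd] at hi hj
  rcases eq_or_ne (orderOf z.1) 0 with h0 | h0
  · have hj0 : j = 0 := by simpa [h0] using orderOf_dvd_iff_zpow_eq_one.2 hj.1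
    simp [← hj.2, hj0]
  have hgd := orderOf_zpow_dvd_div_gcd z.1 (orderOf_dvd_iff_zpow_eq_one.2 hi.2)
  have hhd := orderOf_zpow_dvd_div_gcd z.2 (orderOf_dvd_iff_zpow_eq_one.2 hj.1)
  rw [hi.1] at hgd
  rw [hj.2, Nat.gcd_comm] at hhd
  exact ((Nat.coprime_div_gcd_div_gcd (Nat.gcd_pos_of_pos_left _ (Nat.pos_of_ne_zero h0))
    ).coprime_dvd_left hgd).coprime_dvd_right hhd

end Orders

section Graphs

variable {V α β : Type*}

lemma SimpleGraph.eq_iff_eq_or_adj_iff {Γ Δ : SimpleGraph V} :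
    Γ = Δ ↔ ∀ x y, (x = y ∨ Γ.Adj x y ↔ x = y ∨ Δ.Adj x y) := by
  refine ⟨fun h _ _ => h ▸ Iff.rfl, fun h => ?_⟩
  ext x y
  by_cases hxy : x = y
  · simp [hxy]
  simpa [hxy] using h x y

lemma eq_or_enhancedPowerGraph_adj_iff {G : Type*} [Group G] {x y : G} :
    x = y ∨ (enhancedPowerGraph G).Adj x y ↔ ∃ z, x ∈ zpowers z ∧ y ∈ zpowers z := by
  refine ⟨?_, fun h => or_iff_not_imp_left.2 fun hxy => ⟨hxy, h⟩⟩
  rintro (rfl | ⟨-, h⟩)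
  · exact ⟨x, mem_zpowers x, mem_zpowers x⟩
  · exact h

lemma eq_or_strongProd_adj_iff {Γ : SimpleGraph α} {Δ : SimpleGraph β} {p q : α × β} :
    p = q ∨ (strongProd Γ Δ).Adj p q ↔
      (p.1 = q.1 ∨ Γ.Adj p.1 q.1) ∧ (p.2 = q.2 ∨ Δ.Adj p.2 q.2) := by
  simp only [strongProd, Prod.ext_iff]
  tauto

end Graphs

theorem stmt_1_general {G H : Type*} [Group G] [Group H] :
    enhancedPowerGraph (G × H) = strongProd (enhancedPowerGraph G) (enhancedPowerGraph H) ↔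
      ∀ (g : G) (h : H), Nat.gcd (orderOf g) (orderOf h) = 1 := by
  simp only [SimpleGraph.eq_iff_eq_or_adj_iff, Prod.forall, eq_or_strongProd_adj_iff,
    eq_or_enhancedPowerGraph_adj_iff]
  constructor
  · intro hiff g h
    obtain ⟨z, hg, hh⟩ := (hiff g 1 1 h).2
      ⟨⟨g, mem_zpowers g, one_mem _⟩, ⟨h, one_mem _, mem_zpowers h⟩⟩
    exact coprime_orderOf_of_mem_zpowers hg hh
  · refine fun hcop g₁ h₁ g₂ h₂ => ⟨?_, ?_⟩
    · rintro ⟨z, hz₁, hz₂⟩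
      exact ⟨⟨z.1, Prod.fst_mem_zpowers hz₁, Prod.fst_mem_zpowers hz₂⟩,
        ⟨z.2, Prod.snd_mem_zpowers hz₁, Prod.snd_mem_zpowers hz₂⟩⟩
    · rintro ⟨⟨a, ha₁, ha₂⟩, ⟨b, hb₁, hb₂⟩⟩
      exact ⟨(a, b), Prod.mk_mem_zpowers_of_coprime (hcop a b) ha₁ hb₁,
        Prod.mk_mem_zpowers_of_coprime (hcop a b) ha₂ hb₂⟩

theorem stmt_1 {G H : Type*} [Group G] [Group H]
    (hG : Monoid.IsTorsion G) (hH : Monoid.IsTorsion H) :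
    enhancedPowerGraph (G × H) = strongProd (enhancedPowerGraph G) (enhancedPowerGraph H) ↔
      ∀ (g : G) (h : H), Nat.gcd (orderOf g) (orderOf h) = 1 :=
  stmt_1_general
end

section
/- Let G be a finite group and define x ≡ₑ y iff x and y have equal closed neighborhoods in the enhanced power graph of G. Then for every x ∈ G, the subgroup generated by the ≡ₑ-class of x equals the intersection of all maximal cliques of the enhanced power graph containing that class, and this intersection is a cyclic subgroup of G. -/
open SimpleGraph Subgroup

/-!
In a finite group the closed neighbourhood of `x` in the enhanced power graph is the union of
the maximal cyclic subgroups containing `x`, while the generator of a maximal cyclic subgroup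
`K` is adjacent (or equal) to `y` only if `y ∈ K`. Hence `x ≡ₑ y` iff `x` and `y` lie in the
same maximal cyclic subgroups. The intersection `D` of those containing `x` is a subgroup of a
cyclic group, so `D = ⟨c⟩`, and `c ≡ₑ x`; as the class of `x` lies in `D`, it generates `D`.
A maximal clique containing `c` contains `⟨c⟩`, and maximal cyclic subgroups are maximal
cliques, so `D` is also the intersection of the maximal cliques containing the class.
-/

lemma SimpleGraph.IsClique.subset_closedNbhd {V : Type*} {Γ : SimpleGraph V} {s : Set V}
    (hs : Γ.IsClique s) {a : V} (ha : a ∈ s) : s ⊆ closedNbhd Γ a := fun b hb => by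
  by_cases hab : a = b
  · exact Or.inr hab.symm
  · exact Or.inl (hs ha hb hab)

section

variable {G : Type*} [Group G]

lemma mem_closedNbhd_enhancedPowerGraph {x z : G} :
    z ∈ closedNbhd (enhancedPowerGraph G) x ↔ ∃ w : G, x ∈ zpowers w ∧ z ∈ zpowers w := by
  refine ⟨?_, fun h => ?_⟩
  · rintro (⟨-, h⟩ | rfl)
    · exact h
    · exact ⟨z, mem_zpowers z, mem_zpowers z⟩
  · by_cases hxz : x = z
    · exact Or.inr hxz.symm
    · exact Or.inl ⟨hxz, h⟩

lemma isClique_enhancedPowerGraph_zpowers (g : G) :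
    (enhancedPowerGraph G).IsClique (zpowers g : Set G) :=
  fun _ ha _ hb hab => ⟨hab, g, ha, hb⟩

lemma zpowers_subset_of_maximal_isClique {s : Set G}
    (hs : Maximal (enhancedPowerGraph G).IsClique s) {c : G} (hc : c ∈ s) :
    (zpowers c : Set G) ⊆ s := by
  have hunion : (enhancedPowerGraph G).IsClique (s ∪ zpowers c) := by
    refine Set.pairwise_union.2
      ⟨hs.1, isClique_enhancedPowerGraph_zpowers c, fun a ha b hb hab => ?_⟩
    obtain ⟨w, hcw, haw⟩ := mem_closedNbhd_enhancedPowerGraph.1 (hs.1.subset_closedNbhd hc ha)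
    have hadj : (enhancedPowerGraph G).Adj a b := ⟨hab, w, haw, zpowers_le.2 hcw hb⟩
    exact ⟨hadj, hadj.symm⟩
  exact Set.union_subset_iff.1 (hs.2 hunion Set.subset_union_left) |>.2

namespace IsMaxCyclic

variable {K : Subgroup G}

lemma eq_zpowers_of_le (hK : IsMaxCyclic K) {w : G} (h : K ≤ zpowers w) : K = zpowers w :=
  le_antisymm h (hK.2 ⟨w, rfl⟩ h)

lemma maximal_isClique (hK : IsMaxCyclic K) :
    Maximal (enhancedPowerGraph G).IsClique (K : Set G) := by
  obtain ⟨g, hg⟩ := hK.1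
  refine ⟨hg ▸ isClique_enhancedPowerGraph_zpowers g, fun s hs hKs a ha => ?_⟩
  have hgK : g ∈ K := hg ▸ mem_zpowers g
  by_cases hag : a = g
  · exact hag ▸ hgK
  · obtain ⟨-, w, haw, hgw⟩ := hs ha (hKs hgK) hag
    rw [hK.eq_zpowers_of_le (hg ▸ zpowers_le.2 hgw)]
    exact haw

lemma generator_mem_closedNbhd_iff {g : G} (hK : IsMaxCyclic (zpowers g)) {y : G} :
    g ∈ closedNbhd (enhancedPowerGraph G) y ↔ y ∈ zpowers g := by
  rw [mem_closedNbhd_enhancedPowerGraph]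
  refine ⟨fun ⟨w, hyw, hgw⟩ => ?_, fun hy => ⟨g, hy, mem_zpowers g⟩⟩
  rwa [hK.eq_zpowers_of_le (zpowers_le.2 hgw)]

end IsMaxCyclic

variable [Finite G]

lemma exists_isMaxCyclic_ge_zpowers (w : G) : ∃ K, IsMaxCyclic K ∧ zpowers w ≤ K :=
  let ⟨K, hwK, hK⟩ := Finite.exists_le_maximal (p := fun K : Subgroup G => ∃ g, K = zpowers g)
    ⟨w, rfl⟩
  ⟨K, hK, hwK⟩

lemma mem_closedNbhd_enhancedPowerGraph_iff_isMaxCyclic {x z : G} :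
    z ∈ closedNbhd (enhancedPowerGraph G) x ↔ ∃ K, IsMaxCyclic K ∧ x ∈ K ∧ z ∈ K := by
  rw [mem_closedNbhd_enhancedPowerGraph]
  constructor
  · rintro ⟨w, hx, hz⟩
    obtain ⟨K, hK, hwK⟩ := exists_isMaxCyclic_ge_zpowers w
    exact ⟨K, hK, hwK hx, hwK hz⟩
  · rintro ⟨K, hK, hx, hz⟩
    obtain ⟨g, rfl⟩ := hK.1
    exact ⟨g, hx, hz⟩

lemma closedNbhd_enhancedPowerGraph_eq_iff {x y : G} :
    closedNbhd (enhancedPowerGraph G) y = closedNbhd (enhancedPowerGraph G) x ↔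
      ∀ K, IsMaxCyclic K → (y ∈ K ↔ x ∈ K) := by
  refine ⟨fun h K hK => ?_, fun h => ?_⟩
  · obtain ⟨g, rfl⟩ := hK.1
    rw [← hK.generator_mem_closedNbhd_iff, ← hK.generator_mem_closedNbhd_iff, h]
  · ext z
    simp only [mem_closedNbhd_enhancedPowerGraph_iff_isMaxCyclic]
    exact exists_congr fun K => and_congr_right fun hK => and_congr_left' (h K hK)

lemma exists_zpowers_eq_sInf_isMaxCyclic (x : G) :
    ∃ c : G, zpowers c = sInf {K | IsMaxCyclic K ∧ x ∈ K} := by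
  obtain ⟨K, hK, hxK⟩ := exists_isMaxCyclic_ge_zpowers x
  obtain ⟨g, rfl⟩ := hK.1
  have : IsCyclic (sInf {K | IsMaxCyclic K ∧ x ∈ K} : Subgroup G) :=
    isCyclic_of_le (sInf_le ⟨hK, hxK (mem_zpowers x)⟩)
  exact (Subgroup.isCyclic_iff_exists_zpowers_eq_top _).1 this

end

theorem stmt_4 {G : Type*} [Group G] [Fintype G] (x : G) :
    (↑(Subgroup.closure
        {y : G | closedNbhd (enhancedPowerGraph G) y = closedNbhd (enhancedPowerGraph G) x}) : Set G) =
      ⋂₀ {s : Set G | Maximal (enhancedPowerGraph G).IsClique s ∧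
        {y : G | closedNbhd (enhancedPowerGraph G) y = closedNbhd (enhancedPowerGraph G) x} ⊆ s} ∧
    ∃ c : G, Subgroup.closure
        {y : G | closedNbhd (enhancedPowerGraph G) y = closedNbhd (enhancedPowerGraph G) x} =
      Subgroup.zpowers c := by
  simp only [closedNbhd_enhancedPowerGraph_eq_iff]
  obtain ⟨c, hcD⟩ := exists_zpowers_eq_sInf_isMaxCyclic x
  set D := sInf {K | IsMaxCyclic K ∧ x ∈ K}
  set cls := {y : G | ∀ K, IsMaxCyclic K → (y ∈ K ↔ x ∈ K)}
  have hD_le {K : Subgroup G} (hK : IsMaxCyclic K) (hxK : x ∈ K) : D ≤ K := sInf_le ⟨hK, hxK⟩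
  have hcls_D : cls ⊆ D := fun y hy => mem_sInf.2 fun K hK => (hy K hK.1).2 hK.2
  have hc_cls : c ∈ cls := fun K hK =>
    ⟨fun hcK => zpowers_le.2 hcK (hcD ▸ mem_sInf.2 fun K hK => hK.2),
      fun hxK => hD_le hK hxK (hcD ▸ mem_zpowers c)⟩
  have hclosure : closure cls = zpowers c :=
    le_antisymm (hcD ▸ (closure_le _).2 hcls_D) (zpowers_le.2 (subset_closure hc_cls))
  refine ⟨?_, c, hclosure⟩
  rw [hclosure]
  refine Set.Subset.antisymm (Set.subset_sInter fun s ⟨hs, hcls_s⟩ =>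
    zpowers_subset_of_maximal_isClique hs (hcls_s hc_cls)) fun z hz => ?_
  rw [hcD]
  exact mem_sInf.2 fun K hK =>
    hz K ⟨hK.1.maximal_isClique, hcls_D.trans (hD_le hK.1 hK.2)⟩
end

section
/- Every isomorphism between the (undirected) power graphs of two finite groups G and H is also an isomorphism between their enhanced power graphs. -/
/-!
Write `N[u]` for the closed neighbourhood of `u` in the power graph (`v ∈ N[u]` iff one of `u`,
`v` is a power of the other); an isomorphism `e` preserves `N`, hence closed-twin classes and
their sizes. Let `x, y ∈ ⟨z⟩` be incomparable, so `|z|` is not a prime power. Two twins generating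
different cyclic subgroups force every element above them to have prime-power order; hence, for
`u ∈ ⟨z⟩` not adjacent to everything, the twin class of `u` is the set of generators of `⟨u⟩`, of
size `φ |u|`, and `φ |e u| ≤ φ |u|`.

Suppose `x' = e x` and `y' = e y` lie in no common cyclic subgroup. Their common closed
neighbours then form `C = ⟨x'⟩ ⊓ ⟨y'⟩`, a proper subgroup of both containing `1` and the `φ |z|`
twins of `e z`. If those twins are the generators of `⟨e z⟩`, then
`φ |z| = φ |e z| ≤ φ |x'| ≤ φ |x| ≤ φ |z|`, forcing `|z| = 2 |x|`; likewise `|z| = 2 |y|`, so `x`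
and `y` would be comparable. Otherwise `|x'|` is a prime power and its proper divisor `|C|` is at
most `φ |x'| ≤ φ |x| ≤ φ |z| < |C|`.

If instead `z` is adjacent to everything, so is a non-trivial vertex of the power graph of `H`;
this forces `H` to be cyclic or of prime-power order, and the latter is excluded since `|z|`
divides `|H| = |G|`.
-/

open SimpleGraph

namespace Nat

lemma totient_le_totient_of_dvd {a b : ℕ} (h : a ∣ b) (hb : 0 < b) : a.totient ≤ b.totient :=
  le_of_dvd (totient_pos.mpr hb) (totient_dvd_of_dvd h)

lemma eq_two_mul_of_totient_eq {a m : ℕ} (hm : 0 < m) (ha : a ∣ m) (hne : a ≠ m)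
    (h : a.totient = m.totient) : m = 2 * a := by
  obtain ⟨t, rfl⟩ := ha
  have ha0 : 0 < a := Nat.pos_of_mul_pos_right hm
  have ht0 : 0 < t := Nat.pos_of_mul_pos_left hm
  have key := totient_gcd_mul_totient_mul a t
  rw [← h, mul_comm, mul_assoc, Nat.mul_right_inj (totient_pos.mpr ha0).ne'] at key
  -- `key : φ (gcd a t) = φ t * gcd a t`, while `φ (gcd a t) ≤ gcd a t`
  have hgcd : 0 < a.gcd t := gcd_pos_of_pos_left t ha0
  have ht1 : t.totient ≤ 1 :=
    Nat.le_of_mul_le_mul_right (by rw [one_mul, ← key]; exact totient_le _) hgcd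
  rcases (dvd_prime prime_two).mp (dvd_two_of_totient_le_one ht0 ht1) with rfl | rfl
  · exact absurd (mul_one a).symm hne
  · exact mul_comm a 2

lemma le_totient_of_isPrimePow {n d : ℕ} (hn : IsPrimePow n) (hd : d ∣ n) (hdn : d ≠ n) :
    d ≤ n.totient := by
  obtain ⟨p, k, hp, hk, rfl⟩ := hn
  obtain ⟨i, hik, rfl⟩ := (dvd_prime_pow hp.nat_prime).mp hd
  have hik' : i < k := lt_of_le_of_ne hik (by rintro rfl; exact hdn rfl)
  rw [totient_prime_pow hp.nat_prime hk]
  calc p ^ i ≤ p ^ (k - 1) := pow_le_pow_right₀ hp.nat_prime.one_lt.le (by omega)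
    _ ≤ p ^ (k - 1) * (p - 1) := Nat.le_mul_of_pos_right _ (by have := hp.nat_prime.two_le; omega)

end Nat

open Subgroup Set

section ClosedNbhd

variable {V W : Type*} {Γ : SimpleGraph V} {Δ : SimpleGraph W}

def closedTwinClass (Γ : SimpleGraph V) (u : V) : Set V :=
  {v | closedNbhd Γ v = closedNbhd Γ u}

lemma mem_closedNbhd_iff {u v : V} : v ∈ closedNbhd Γ u ↔ Γ.Adj u v ∨ v = u := by
  simp [closedNbhd, or_comm]

lemma mem_closedNbhd_self (u : V) : u ∈ closedNbhd Γ u := mem_closedNbhd_iff.mpr (Or.inr rfl)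

lemma mem_closedNbhd_comm {u v : V} : v ∈ closedNbhd Γ u ↔ u ∈ closedNbhd Γ v := by
  simp only [mem_closedNbhd_iff, Γ.adj_comm, eq_comm]

namespace SimpleGraph.Iso

variable (e : Γ ≃g Δ)

lemma apply_mem_closedNbhd_iff {u v : V} : e v ∈ closedNbhd Δ (e u) ↔ v ∈ closedNbhd Γ u := by
  simp only [mem_closedNbhd_iff, e.map_adj_iff, e.injective.eq_iff]

lemma image_closedNbhd (u : V) : e '' closedNbhd Γ u = closedNbhd Δ (e u) := by
  ext w
  obtain ⟨v, rfl⟩ := e.surjective w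
  rw [e.injective.mem_set_image, e.apply_mem_closedNbhd_iff]

lemma closedNbhd_apply_eq_univ_iff {u : V} :
    closedNbhd Δ (e u) = univ ↔ closedNbhd Γ u = univ := by
  simp only [eq_univ_iff_forall, e.surjective.forall, e.apply_mem_closedNbhd_iff]

lemma image_closedTwinClass (u : V) : e '' closedTwinClass Γ u = closedTwinClass Δ (e u) := by
  ext w
  obtain ⟨v, rfl⟩ := e.surjective w
  simp only [e.injective.mem_set_image, closedTwinClass, mem_ofPred_eq, ← e.image_closedNbhd,
    image_eq_image e.injective]

lemma ncard_closedTwinClass (u : V) :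
    (closedTwinClass Δ (e u)).ncard = (closedTwinClass Γ u).ncard := by
  rw [← e.image_closedTwinClass, ncard_image_of_injective _ e.injective]

end SimpleGraph.Iso

end ClosedNbhd

section Cyclic

variable {K : Type*} [Group K] [Finite K]

lemma mem_zpowers_pow_div_of_pow_eq_one {z w : K} (hw : w ∈ zpowers z) {d : ℕ}
    (hd : d ∣ orderOf z) (hwd : w ^ d = 1) : w ∈ zpowers (z ^ (orderOf z / d)) := by
  obtain ⟨j, rfl⟩ := mem_zpowers_iff.mp hw
  obtain ⟨c, hc⟩ := hd
  have hd0 : d ≠ 0 := by rintro rfl; simp [(orderOf_pos z).ne'] at hc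
  rw [← zpow_natCast, ← zpow_mul, ← orderOf_dvd_iff_zpow_eq_one, hc, Nat.cast_mul, mul_comm j,
    mul_dvd_mul_iff_left (Int.natCast_ne_zero.mpr hd0)] at hwd
  obtain ⟨k, rfl⟩ := hwd
  refine ⟨k, ?_⟩
  simp only [hc, Nat.mul_div_cancel_left c (Nat.pos_of_ne_zero hd0), zpow_mul, zpow_natCast]

lemma zpowers_eq_of_mem_of_orderOf_eq {u w : K} (h : u ∈ zpowers w)
    (ho : orderOf u = orderOf w) : zpowers u = zpowers w :=
  eq_of_le_of_card_ge (zpowers_le.mpr h) (by rw [Nat.card_zpowers, Nat.card_zpowers, ho])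

lemma mem_zpowers_of_orderOf_dvd {z u w : K} (hu : u ∈ zpowers z) (hw : w ∈ zpowers z)
    (h : orderOf u ∣ orderOf w) : u ∈ zpowers w := by
  have hwz : orderOf w ∣ orderOf z := orderOf_dvd_of_mem_zpowers hw
  have hgen : zpowers w = zpowers (z ^ (orderOf z / orderOf w)) :=
    zpowers_eq_of_mem_of_orderOf_eq
      (mem_zpowers_pow_div_of_pow_eq_one hw hwz (pow_orderOf_eq_one w))
      (orderOf_pow_orderOf_div (orderOf_pos z).ne' hwz).symm
  rw [hgen]
  exact mem_zpowers_pow_div_of_pow_eq_one hu hwz (orderOf_dvd_iff_pow_eq_one.mp h)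

lemma exists_mem_zpowers_orderOf_eq {z : K} {d : ℕ} (hd : d ∣ orderOf z) :
    ∃ t ∈ zpowers z, orderOf t = d :=
  ⟨z ^ (orderOf z / d), npow_mem_zpowers z _, orderOf_pow_orderOf_div (orderOf_pos z).ne' hd⟩

lemma ncard_setOf_zpowers_eq (z : K) :
    {w : K | zpowers w = zpowers z}.ncard = (orderOf z).totient := by
  classical
  have hset : {w : K | zpowers w = zpowers z} =
      Subtype.val '' {t : zpowers z | orderOf t = orderOf z} := by
    ext w
    constructor
    · intro (h : zpowers w = zpowers z)
      have hw : w ∈ zpowers z := h ▸ mem_zpowers w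
      refine ⟨⟨w, hw⟩, show orderOf _ = _ from ?_, rfl⟩
      rw [orderOf_mk, ← Nat.card_zpowers, h, Nat.card_zpowers]
    · rintro ⟨t, ht, rfl⟩
      exact zpowers_eq_of_mem_of_orderOf_eq t.2 (by rwa [Subgroup.orderOf_coe])
  have := Fintype.ofFinite K
  rw [hset, ncard_image_of_injective _ Subtype.coe_injective, ncard_eq_toFinset_card',
    toFinset_ofPred, IsCyclic.card_orderOf_eq_totient (by rw [Fintype.card_zpowers])]

end Cyclic

section PowerGraph

variable {K : Type*} [Group K]

lemma mem_closedNbhd_powerGraph {u w : K} :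
    w ∈ closedNbhd (powerGraph K) u ↔ u ∈ zpowers w ∨ w ∈ zpowers u := by
  rw [mem_closedNbhd_iff]
  by_cases h : w = u
  · subst h
    simp [mem_zpowers]
  · simp [powerGraph, Ne.symm h, h]

lemma closedNbhd_powerGraph_one : closedNbhd (powerGraph K) 1 = univ :=
  eq_univ_of_forall fun _ => mem_closedNbhd_powerGraph.mpr (Or.inl (one_mem _))

lemma ne_one_of_closedNbhd_ne_univ {u : K} (h : closedNbhd (powerGraph K) u ≠ univ) : u ≠ 1 := by
  rintro rfl
  exact h closedNbhd_powerGraph_one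

lemma one_notMem_closedTwinClass {u : K} (h : closedNbhd (powerGraph K) u ≠ univ) :
    1 ∉ closedTwinClass (powerGraph K) u :=
  fun h1 => h ((h1 : closedNbhd _ _ = _) ▸ closedNbhd_powerGraph_one)

lemma closedNbhd_powerGraph_congr {u v : K} (h : zpowers u = zpowers v) :
    closedNbhd (powerGraph K) u = closedNbhd (powerGraph K) v := by
  ext w
  simp only [mem_closedNbhd_powerGraph, ← zpowers_le, h]

lemma setOf_zpowers_eq_subset_closedTwinClass (u : K) :
    {v | zpowers v = zpowers u} ⊆ closedTwinClass (powerGraph K) u :=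
  fun _ h => closedNbhd_powerGraph_congr h

lemma orderOf_dvd_or_dvd_of_mem_closedNbhd {u w : K} (h : w ∈ closedNbhd (powerGraph K) u) :
    orderOf u ∣ orderOf w ∨ orderOf w ∣ orderOf u :=
  (mem_closedNbhd_powerGraph.mp h).imp orderOf_dvd_of_mem_zpowers orderOf_dvd_of_mem_zpowers

variable [Finite K]

lemma mem_closedNbhd_of_isPrimePow {z x y : K} (hz : IsPrimePow (orderOf z))
    (hx : x ∈ zpowers z) (hy : y ∈ zpowers z) : y ∈ closedNbhd (powerGraph K) x := by
  obtain ⟨p, k, hp, -, hpk⟩ := hz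
  obtain ⟨i, -, hi⟩ := (Nat.dvd_prime_pow hp.nat_prime).mp (hpk ▸ orderOf_dvd_of_mem_zpowers hx)
  obtain ⟨j, -, hj⟩ := (Nat.dvd_prime_pow hp.nat_prime).mp (hpk ▸ orderOf_dvd_of_mem_zpowers hy)
  rw [mem_closedNbhd_powerGraph]
  rcases le_total i j with h | h
  · exact Or.inl (mem_zpowers_of_orderOf_dvd hx hy (by rw [hi, hj]; exact pow_dvd_pow p h))
  · exact Or.inr (mem_zpowers_of_orderOf_dvd hy hx (by rw [hi, hj]; exact pow_dvd_pow p h))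

lemma isPrimePow_orderOf_of_mem_closedTwinClass_of_mem_zpowers {u v w : K}
    (htwin : v ∈ closedTwinClass (powerGraph K) u) (huv : u ∈ zpowers v)
    (hne : orderOf u ≠ orderOf v) (hu : u ≠ 1) (hw : u ∈ zpowers w) :
    IsPrimePow (orderOf w) := by
  have below : ∀ t ∈ zpowers v, orderOf u ∣ orderOf t ∨ orderOf t ∣ orderOf u := fun t ht =>
    orderOf_dvd_or_dvd_of_mem_closedNbhd
      ((htwin : closedNbhd _ v = _) ▸ mem_closedNbhd_powerGraph.mpr (Or.inr ht))
  have above : ∀ s, u ∈ zpowers s → orderOf v ∣ orderOf s ∨ orderOf s ∣ orderOf v := fun s hs =>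
    orderOf_dvd_or_dvd_of_mem_closedNbhd
      ((htwin : closedNbhd _ v = _).symm ▸ mem_closedNbhd_powerGraph.mpr (Or.inl hs))
  obtain ⟨r, k, hr, hrv, hru⟩ : ∃ r k, r.Prime ∧ r ^ k ∣ orderOf v ∧ ¬ r ^ k ∣ orderOf u := by
    have : ¬ orderOf v ∣ orderOf u :=
      fun h => hne (Nat.dvd_antisymm (orderOf_dvd_of_mem_zpowers huv) h)
    simpa [Nat.dvd_iff_prime_pow_dvd_dvd (orderOf u) (orderOf v)] using this
  -- an element of order `r ^ k` below `v` is comparable with `u`, so `|u|` is a power of `r`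
  obtain ⟨t, ht, hto⟩ := exists_mem_zpowers_orderOf_eq hrv
  obtain ⟨i, -, hi⟩ := (Nat.dvd_prime_pow hr).mp (hto ▸ (below t ht).resolve_right (hto ▸ hru))
  have hi0 : i ≠ 0 := by
    rintro rfl
    exact hu (orderOf_eq_one_iff.mp (by simpa using hi))
  have hrw : r ∣ orderOf w := (dvd_pow_self r hi0).trans (hi ▸ orderOf_dvd_of_mem_zpowers hw)
  refine isPrimePow_iff_unique_prime_dvd.mpr ⟨r, ⟨hr, hrw⟩, fun q ⟨hq, hqw⟩ => ?_⟩
  -- for a prime `q ≠ r` dividing `|w|`, an element of order `|u| * q` above `u` is comparable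
  -- with `v`, so `q ∣ |v|`, and then an element of order `q` below `v` is comparable with `u`
  by_contra hqr
  have hcop : ∀ j, Nat.Coprime (r ^ j) q :=
    fun j => ((Nat.coprime_primes hr hq).mpr (Ne.symm hqr)).pow_left j
  obtain ⟨s, hs, hso⟩ := exists_mem_zpowers_orderOf_eq
    ((hcop i).mul_dvd_of_dvd_of_dvd (hi ▸ orderOf_dvd_of_mem_zpowers hw) hqw)
  have hus : u ∈ zpowers s :=
    mem_zpowers_of_orderOf_dvd hw hs (by rw [hso, hi]; exact dvd_mul_right _ _)
  rcases above s hus with hvs | hsv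
  · exact hru (hi ▸ (hcop k).dvd_of_dvd_mul_right (hso ▸ hrv.trans hvs))
  · obtain ⟨t', ht', ht'o⟩ := exists_mem_zpowers_orderOf_eq ((dvd_mul_left q _).trans (hso ▸ hsv))
    rcases below t' ht' with h | h <;> rw [hi, ht'o] at h
    · exact hqr ((Nat.prime_dvd_prime_iff_eq hr hq).mp ((dvd_pow_self r hi0).trans h)).symm
    · exact hqr ((Nat.prime_dvd_prime_iff_eq hq hr).mp (hq.dvd_of_dvd_pow h))

lemma isPrimePow_orderOf_of_mem_closedTwinClass {u v w : K}
    (htwin : v ∈ closedTwinClass (powerGraph K) u) (hne : zpowers v ≠ zpowers u) (hu : u ≠ 1)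
    (hv : v ≠ 1) (hw : u ∈ zpowers w) : IsPrimePow (orderOf w) := by
  have hvu : v ∈ closedNbhd (powerGraph K) u := (htwin : closedNbhd _ v = _) ▸ mem_closedNbhd_self v
  rcases mem_closedNbhd_powerGraph.mp hvu with huv | hvu
  · exact isPrimePow_orderOf_of_mem_closedTwinClass_of_mem_zpowers htwin huv
      (fun h => hne (zpowers_eq_of_mem_of_orderOf_eq huv h).symm) hu hw
  · exact isPrimePow_orderOf_of_mem_closedTwinClass_of_mem_zpowers
      (htwin : closedNbhd _ v = _).symm hvu (fun h => hne (zpowers_eq_of_mem_of_orderOf_eq hvu h))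
      hv (zpowers_le.mpr hw hvu)

lemma closedTwinClass_powerGraph_eq {z u : K} (hz : ¬ IsPrimePow (orderOf z))
    (hu : u ∈ zpowers z) (hdom : closedNbhd (powerGraph K) u ≠ univ) :
    closedTwinClass (powerGraph K) u = {v | zpowers v = zpowers u} := by
  refine Subset.antisymm (fun v hv => ?_) (setOf_zpowers_eq_subset_closedTwinClass u)
  by_contra hne
  exact hz (isPrimePow_orderOf_of_mem_closedTwinClass hv hne (ne_one_of_closedNbhd_ne_univ hdom)
    (fun h => one_notMem_closedTwinClass hdom (h ▸ hv)) hu)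

lemma ncard_closedTwinClass_powerGraph {z u : K}
    (hz : ¬ IsPrimePow (orderOf z)) (hu : u ∈ zpowers z)
    (hdom : closedNbhd (powerGraph K) u ≠ univ) :
    (closedTwinClass (powerGraph K) u).ncard = (orderOf u).totient := by
  rw [closedTwinClass_powerGraph_eq hz hu hdom, ncard_setOf_zpowers_eq]

lemma totient_orderOf_le_ncard_closedTwinClass (u : K) :
    (orderOf u).totient ≤ (closedTwinClass (powerGraph K) u).ncard :=
  ncard_setOf_zpowers_eq u ▸ ncard_le_ncard (setOf_zpowers_eq_subset_closedTwinClass u)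

lemma isCyclic_or_isPrimePow_card_of_closedNbhd_eq_univ {s : K}
    (hs : closedNbhd (powerGraph K) s = univ) (hs1 : s ≠ 1) :
    IsCyclic K ∨ IsPrimePow (Nat.card K) := by
  have hcmp : ∀ g, orderOf s ∣ orderOf g ∨ orderOf g ∣ orderOf s :=
    fun g => orderOf_dvd_or_dvd_of_mem_closedNbhd (hs ▸ mem_univ g)
  have hs1' : orderOf s ≠ 1 := mt orderOf_eq_one_iff.mp hs1
  by_cases hp : IsPrimePow (orderOf s)
  · right
    obtain ⟨p, ⟨hp, hps⟩, huniq⟩ := isPrimePow_iff_unique_prime_dvd.mp hp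
    refine isPrimePow_iff_unique_prime_dvd.mpr
      ⟨p, ⟨hp, hps.trans (orderOf_dvd_natCard s)⟩, fun q ⟨hq, hqK⟩ => huniq q ⟨hq, ?_⟩⟩
    have := Fact.mk hq
    obtain ⟨g, hg⟩ := exists_prime_orderOf_dvd_card' q hqK
    rcases hcmp g with h | h <;> rw [hg] at h
    · exact ((Nat.dvd_prime hq).mp h).resolve_left hs1' ▸ dvd_rfl
    · exact h
  · left
    refine ⟨s, fun g => ?_⟩
    rcases mem_closedNbhd_powerGraph.mp (hs ▸ mem_univ g) with hsg | hgs
    · refine mem_zpowers_of_orderOf_dvd (mem_zpowers g) hsg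
        ((Nat.dvd_iff_prime_pow_dvd_dvd _ _).mpr fun r k hr hrk => ?_)
      obtain ⟨t, ht, hto⟩ := exists_mem_zpowers_orderOf_eq hrk
      refine hto ▸ (hcmp t).resolve_left fun h => hp ?_
      obtain ⟨i, -, hi⟩ := (Nat.dvd_prime_pow hr).mp (hto ▸ h)
      exact hi ▸ hr.isPrimePow.pow (by rintro rfl; exact hs1' (by simpa using hi))
    · exact hgs

end PowerGraph

section CommonNeighbours

variable {K : Type*} [Group K] {x y : K}

lemma mem_inf_of_mem_closedNbhd (hxy : y ∉ closedNbhd (powerGraph K) x)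
    (hno : ∀ g, x ∈ zpowers g → y ∉ zpowers g) {w : K}
    (hwx : w ∈ closedNbhd (powerGraph K) x) (hwy : w ∈ closedNbhd (powerGraph K) y) :
    w ∈ zpowers x ⊓ zpowers y := by
  rcases mem_closedNbhd_powerGraph.mp hwx with hxw | hwx <;>
    rcases mem_closedNbhd_powerGraph.mp hwy with hyw | hwy
  · exact absurd hyw (hno w hxw)
  · exact absurd (mem_closedNbhd_powerGraph.mpr (Or.inl (zpowers_le.mpr hwy hxw))) hxy
  · exact absurd (mem_closedNbhd_powerGraph.mpr (Or.inr (zpowers_le.mpr hwx hyw))) hxy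
  · exact ⟨hwx, hwy⟩

lemma closedTwinClass_subset_inf (hxy : y ∉ closedNbhd (powerGraph K) x)
    (hno : ∀ g, x ∈ zpowers g → y ∉ zpowers g) {z : K}
    (hxz : x ∈ closedNbhd (powerGraph K) z) (hyz : y ∈ closedNbhd (powerGraph K) z) :
    closedTwinClass (powerGraph K) z ⊆ zpowers x ⊓ zpowers y := fun _ hv =>
  mem_inf_of_mem_closedNbhd hxy hno (mem_closedNbhd_comm.mp ((hv : closedNbhd _ _ = _) ▸ hxz))
    (mem_closedNbhd_comm.mp ((hv : closedNbhd _ _ = _) ▸ hyz))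

variable [Finite K]

lemma card_inf_dvd_orderOf_ne (hxy : y ∉ closedNbhd (powerGraph K) x) :
    Nat.card ↥(zpowers x ⊓ zpowers y) ∣ orderOf x ∧
      Nat.card ↥(zpowers x ⊓ zpowers y) ≠ orderOf x := by
  refine ⟨Nat.card_zpowers x ▸ card_dvd_of_le inf_le_left, fun h => hxy ?_⟩
  have heq : zpowers x ⊓ zpowers y = zpowers x :=
    eq_of_le_of_card_ge inf_le_left (by rw [Nat.card_zpowers, h])
  have hx : x ∈ zpowers x ⊓ zpowers y := by rw [heq]; exact mem_zpowers x
  exact mem_closedNbhd_powerGraph.mpr (Or.inl (mem_inf.mp hx).2)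

lemma ncard_closedTwinClass_lt_card_inf (hxy : y ∉ closedNbhd (powerGraph K) x)
    (hno : ∀ g, x ∈ zpowers g → y ∉ zpowers g) {z : K}
    (hxz : x ∈ closedNbhd (powerGraph K) z) (hyz : y ∈ closedNbhd (powerGraph K) z)
    (hzdom : closedNbhd (powerGraph K) z ≠ univ) :
    (closedTwinClass (powerGraph K) z).ncard < Nat.card ↥(zpowers x ⊓ zpowers y) := by
  calc _ < (insert 1 (closedTwinClass (powerGraph K) z)).ncard := by
        rw [ncard_insert_of_notMem (one_notMem_closedTwinClass hzdom)]
        exact Nat.lt_succ_self _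
    _ ≤ ((zpowers x ⊓ zpowers y : Subgroup K) : Set K).ncard :=
        ncard_le_ncard (insert_subset (one_mem _) (closedTwinClass_subset_inf hxy hno hxz hyz))
    _ = _ := (Nat.card_coe_set_eq _).symm

end CommonNeighbours

section Transfer

variable {G H : Type*} [Group G] [Group H] [Finite G]
  (e : powerGraph G ≃g powerGraph H) {x y z : G}

lemma ncard_closedTwinClass_apply (hz : ¬ IsPrimePow (orderOf z)) {u : G} (hu : u ∈ zpowers z)
    (hdom : closedNbhd (powerGraph G) u ≠ univ) :
    (closedTwinClass (powerGraph H) (e u)).ncard = (orderOf u).totient := by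
  rw [e.ncard_closedTwinClass, ncard_closedTwinClass_powerGraph hz hu hdom]

lemma totient_orderOf_apply_le [Finite H] (hz : ¬ IsPrimePow (orderOf z)) {u : G}
    (hu : u ∈ zpowers z) (hdom : closedNbhd (powerGraph G) u ≠ univ) :
    (orderOf (e u)).totient ≤ (orderOf u).totient :=
  ncard_closedTwinClass_apply e hz hu hdom ▸ totient_orderOf_le_ncard_closedTwinClass _

lemma orderOf_eq_two_mul_of_closedTwinClass_subset [Finite H] (hz : ¬ IsPrimePow (orderOf z))
    (hzdom : closedNbhd (powerGraph G) z ≠ univ)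
    (hgen : closedTwinClass (powerGraph H) (e z) ⊆ {v | zpowers v = zpowers (e z)})
    {u w : G} (hu : u ∈ zpowers z) (hw : w ∈ zpowers z) (huw : w ∉ closedNbhd (powerGraph G) u)
    (hdvd : orderOf (e z) ∣ orderOf (e u)) : orderOf z = 2 * orderOf u := by
  have huz : orderOf u ≠ orderOf z := fun h => huw (mem_closedNbhd_powerGraph.mpr
    (Or.inr (zpowers_eq_of_mem_of_orderOf_eq hu h ▸ hw)))
  have hφz : (orderOf (e z)).totient = (orderOf z).totient := by
    rw [← ncard_closedTwinClass_apply e hz (mem_zpowers z) hzdom,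
      Subset.antisymm hgen (setOf_zpowers_eq_subset_closedTwinClass _), ncard_setOf_zpowers_eq]
  have huz' := orderOf_dvd_of_mem_zpowers hu
  refine Nat.eq_two_mul_of_totient_eq (orderOf_pos z) huz' huz
    (le_antisymm (Nat.totient_le_totient_of_dvd huz' (orderOf_pos z)) ?_)
  calc (orderOf z).totient = (orderOf (e z)).totient := hφz.symm
    _ ≤ (orderOf (e u)).totient := Nat.totient_le_totient_of_dvd hdvd (orderOf_pos _)
    _ ≤ _ := totient_orderOf_apply_le e hz hu fun h => huw (h ▸ mem_univ w)

lemma exists_zpowers_apply_of_closedNbhd_ne_univ [Finite H] (hx : x ∈ zpowers z)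
    (hy : y ∈ zpowers z) (hxy : y ∉ closedNbhd (powerGraph G) x)
    (hzdom : closedNbhd (powerGraph G) z ≠ univ) :
    ∃ g, e x ∈ zpowers g ∧ e y ∈ zpowers g := by
  by_contra! hno
  have hz : ¬ IsPrimePow (orderOf z) := fun h => hxy (mem_closedNbhd_of_isPrimePow h hx hy)
  have hyx : x ∉ closedNbhd (powerGraph G) y := mem_closedNbhd_comm.not.mp hxy
  have hxy' : e y ∉ closedNbhd (powerGraph H) (e x) := e.apply_mem_closedNbhd_iff.not.mpr hxy
  have hyx' : e x ∉ closedNbhd (powerGraph H) (e y) := e.apply_mem_closedNbhd_iff.not.mpr hyx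
  have hx'z' : e x ∈ closedNbhd (powerGraph H) (e z) :=
    e.apply_mem_closedNbhd_iff.mpr (mem_closedNbhd_powerGraph.mpr (Or.inr hx))
  have hy'z' : e y ∈ closedNbhd (powerGraph H) (e z) :=
    e.apply_mem_closedNbhd_iff.mpr (mem_closedNbhd_powerGraph.mpr (Or.inr hy))
  have hzdom' := e.closedNbhd_apply_eq_univ_iff.not.mpr hzdom
  set C := zpowers (e x) ⊓ zpowers (e y) with hC
  have hCx : Nat.card C ∣ orderOf (e x) ∧ Nat.card C ≠ orderOf (e x) :=
    card_inf_dvd_orderOf_ne hxy'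
  have hTC : closedTwinClass (powerGraph H) (e z) ⊆ C :=
    closedTwinClass_subset_inf hxy' hno hx'z' hy'z'
  by_cases hgen : closedTwinClass (powerGraph H) (e z) ⊆ {v | zpowers v = zpowers (e z)}
  · have hzC : orderOf (e z) ∣ Nat.card C :=
      Nat.card_zpowers (e z) ▸ card_dvd_of_le (zpowers_le.mpr (hTC rfl))
    have hCy : Nat.card C ∣ orderOf (e y) := by
      rw [hC, inf_comm]
      exact (card_inf_dvd_orderOf_ne hyx').1
    have hxz := orderOf_eq_two_mul_of_closedTwinClass_subset e hz hzdom hgen hx hy hxy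
      (hzC.trans hCx.1)
    have hyz := orderOf_eq_two_mul_of_closedTwinClass_subset e hz hzdom hgen hy hx hyx
      (hzC.trans hCy)
    exact hxy (mem_closedNbhd_powerGraph.mpr
      (Or.inr (mem_zpowers_of_orderOf_dvd hy hx (by omega : orderOf y = orderOf x).dvd)))
  · obtain ⟨v, hvT, hv⟩ := not_subset.mp hgen
    have hpp : IsPrimePow (orderOf (e x)) :=
      isPrimePow_orderOf_of_mem_closedTwinClass hvT hv (ne_one_of_closedNbhd_ne_univ hzdom')
        (fun h => one_notMem_closedTwinClass hzdom' (h ▸ hvT)) (mem_inf.mp (hTC rfl)).1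
    have hzlt : (orderOf z).totient < Nat.card C := by
      rw [← ncard_closedTwinClass_apply e hz (mem_zpowers z) hzdom]
      exact ncard_closedTwinClass_lt_card_inf hxy' hno hx'z' hy'z' hzdom'
    have := Nat.le_totient_of_isPrimePow hpp hCx.1 hCx.2
    have := totient_orderOf_apply_le e hz hx fun h => hxy (h ▸ mem_univ y)
    have := Nat.totient_le_totient_of_dvd (orderOf_dvd_of_mem_zpowers hx) (orderOf_pos z)
    omega

lemma exists_zpowers_apply [Finite H] (hx : x ∈ zpowers z) (hy : y ∈ zpowers z) :
    ∃ g, e x ∈ zpowers g ∧ e y ∈ zpowers g := by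
  by_cases hxy : y ∈ closedNbhd (powerGraph G) x
  · rcases mem_closedNbhd_powerGraph.mp (e.apply_mem_closedNbhd_iff.mpr hxy) with h | h
    · exact ⟨e y, h, mem_zpowers _⟩
    · exact ⟨e x, mem_zpowers _, h⟩
  by_cases hzdom : closedNbhd (powerGraph G) z = univ
  · have hz1 : z ≠ 1 := by
      rintro rfl
      exact ne_one_of_closedNbhd_ne_univ (fun h => hxy (h ▸ mem_univ y)) (by simpa using hx)
    obtain ⟨s, hs, hs1⟩ : ∃ s : H, closedNbhd (powerGraph H) s = univ ∧ s ≠ 1 := by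
      by_cases hez : e z = 1
      · exact ⟨e 1, e.closedNbhd_apply_eq_univ_iff.mpr closedNbhd_powerGraph_one,
          hez ▸ e.injective.ne hz1.symm⟩
      · exact ⟨e z, e.closedNbhd_apply_eq_univ_iff.mpr hzdom, hez⟩
    rcases isCyclic_or_isPrimePow_card_of_closedNbhd_eq_univ hs hs1 with ⟨g, hg⟩ | hcard
    · exact ⟨g, hg _, hg _⟩
    · rw [← Nat.card_congr e.toEquiv] at hcard
      exact absurd (mem_closedNbhd_of_isPrimePow (hcard.dvd (orderOf_dvd_natCard z)
        (mt orderOf_eq_one_iff.mp hz1)) hx hy) hxy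
  · exact exists_zpowers_apply_of_closedNbhd_ne_univ e hx hy hxy hzdom

end Transfer

theorem stmt_11_general {G H : Type*} [Group G] [Group H] [Fintype G]
    (e : powerGraph G ≃g powerGraph H) (x y : G) :
    (enhancedPowerGraph G).Adj x y ↔ (enhancedPowerGraph H).Adj (e x) (e y) := by
  have : Finite H := Finite.of_equiv G e.toEquiv
  constructor
  · rintro ⟨hne, z, hx, hy⟩
    exact ⟨e.injective.ne hne, exists_zpowers_apply e hx hy⟩
  · rintro ⟨hne, z, hx, hy⟩
    refine ⟨fun h => hne (congrArg e h), ?_⟩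
    simpa using exists_zpowers_apply e.symm hx hy

theorem stmt_11 {G H : Type*} [Group G] [Group H] [Fintype G] [Fintype H]
    (e : powerGraph G ≃g powerGraph H) (x y : G) :
    (enhancedPowerGraph G).Adj x y ↔ (enhancedPowerGraph H).Adj (e x) (e y) :=
  stmt_11_general e x y
end

section
/- Let G be the direct product of six cyclic groups of orders 2, 2, 3, 3, 5, 5 with generators a₁, a₂, b₁, b₂, c₁, c₂ respectively. Then the five elements a₁b₁, b₁c₂, a₂, b₂, a₁c₁ induce a 5-cycle in the enhanced power graph of G; in particular, the enhanced power graph of this finite abelian group is not perfect. -/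
/-!
Edges: if `x = p * q` and `y = p * r` where `p, q, r` have pairwise coprime orders, Bézout puts
both `x` and `y` in the cyclic group generated by `p * q * r`. Non-edges: projecting onto a
`p`-primary component `(ℤ/p)²`, the two endpoints map to the standard basis, which lies in no
cyclic subgroup. The resulting induced 5-cycle has clique number 2 and chromatic number 3.
-/

open SimpleGraph

/-- The group `C₂ × C₂ × C₃ × C₃ × C₅ × C₅`, written multiplicatively. -/
abbrev G18 : Type :=
  Multiplicative (ZMod 2 × ZMod 2 × ZMod 3 × ZMod 3 × ZMod 5 × ZMod 5)

def a₁ : G18 := Multiplicative.ofAdd (1, 0, 0, 0, 0, 0)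
def a₂ : G18 := Multiplicative.ofAdd (0, 1, 0, 0, 0, 0)
def b₁ : G18 := Multiplicative.ofAdd (0, 0, 1, 0, 0, 0)
def b₂ : G18 := Multiplicative.ofAdd (0, 0, 0, 1, 0, 0)
def c₁ : G18 := Multiplicative.ofAdd (0, 0, 0, 0, 1, 0)
def c₂ : G18 := Multiplicative.ofAdd (0, 0, 0, 0, 0, 1)

/-- The five elements `a₁b₁, b₁c₂, a₂, b₂, a₁c₁`. -/
def v : Fin 5 → G18 := ![a₁ * b₁, b₁ * c₂, a₂, b₂, a₁ * c₁]

namespace SimpleGraph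

def IsPerfect {V : Type*} (Γ : SimpleGraph V) : Prop :=
  ∀ s : Set V, (Γ.induce s).chromaticNumber = (Γ.induce s).cliqueNum

lemma cliqueNum_lt_of_cliqueFree {V : Type*} {Γ : SimpleGraph V} {n : ℕ} (h : Γ.CliqueFree n) :
    Γ.cliqueNum < n := by
  obtain ⟨s, hs⟩ := Γ.exists_isNClique_cliqueNum
  by_contra! hn
  exact h.mono hn s hs

lemma cycleGraph_five_cliqueFree_three : (cycleGraph 5).CliqueFree 3 := by
  rintro s hs
  obtain ⟨a, b, c, hab, hac, hbc, -⟩ := is3Clique_iff.1 hs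
  revert a b c
  decide

lemma not_isPerfect_of_cycleGraph_five_isIndContained {V : Type*} {Γ : SimpleGraph V}
    (h : cycleGraph 5 ⊴ Γ) : ¬ Γ.IsPerfect := by
  obtain ⟨s, ⟨e⟩⟩ := isIndContained_iff_exists_iso_induce.1 h
  intro hperf
  have hχ : (Γ.induce s).chromaticNumber = 3 := by
    rw [← chromaticNumber_congr e, chromaticNumber_cycleGraph_of_odd 5 (by norm_num) (by decide)]
  have hω : (Γ.induce s).cliqueNum < 3 :=
    cliqueNum_lt_of_cliqueFree (cycleGraph_five_cliqueFree_three.comap e.isContained')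
  have h3 : (3 : ℕ∞) = (Γ.induce s).cliqueNum := hχ ▸ hperf s
  exact hω.ne (by exact_mod_cast h3.symm)

lemma adj_iff_cycleGraph_five_adj {V : Type*} {Γ : SimpleGraph V} {f : Fin 5 → V}
    (hadj : ∀ i, Γ.Adj (f i) (f (i + 1))) (hnadj : ∀ i, ¬ Γ.Adj (f i) (f (i + 2)))
    (i j : Fin 5) : Γ.Adj (f i) (f j) ↔ (cycleGraph 5).Adj i j := by
  obtain ⟨d, rfl⟩ : ∃ d, j = i + d := ⟨j - i, by abel⟩
  rw [cycleGraph_adj, sub_add_cancel_left, add_sub_cancel_left]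
  fin_cases d
  · exact iff_of_false (by simp) (by decide)
  · exact iff_of_true (hadj i) (by decide)
  · exact iff_of_false (hnadj i) (by decide)
  · have h := hnadj (i + 3)
    rw [show i + 3 + 2 = i by rw [add_assoc]; simp] at h
    exact iff_of_false (fun h' => h h'.symm) (by decide)
  · have h := hadj (i + 4)
    rw [show i + 4 + 1 = i by rw [add_assoc]; simp] at h
    exact iff_of_true h.symm (by decide)

lemma injective_of_adj_iff {V W : Type*} {Γ : SimpleGraph V} {H : SimpleGraph W} {f : W → V}
    (hH : ∀ i j, (∀ k, H.Adj i k ↔ H.Adj j k) → i = j)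
    (hf : ∀ i j, Γ.Adj (f i) (f j) ↔ H.Adj i j) : Function.Injective f :=
  fun i j hij => hH i j fun k => by rw [← hf, ← hf, hij]

end SimpleGraph

section EnhancedPowerGraph

variable {G : Type*}

lemma Commute.mem_zpowers_mul_of_coprime [Group G] {a b : G} (hab : Commute a b) {m n : ℕ}
    (ha : a ^ m = 1) (hb : b ^ n = 1) (hmn : m.Coprime n) : a ∈ Subgroup.zpowers (a * b) := by
  have hbezout : (m : ℤ) * m.gcdA n + n * m.gcdB n = 1 := by
    rw [← Nat.gcd_eq_gcd_ab, hmn.gcd_eq_one, Nat.cast_one]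
  refine Subgroup.mem_zpowers_iff.2 ⟨n * m.gcdB n, ?_⟩
  calc (a * b) ^ (n * m.gcdB n)
      = a ^ (n * m.gcdB n) := by
        rw [hab.mul_zpow, zpow_mul b, zpow_natCast, hb, one_zpow, mul_one]
    _ = a ^ ((m : ℤ) * m.gcdA n + n * m.gcdB n) := by
        rw [zpow_add, zpow_mul a m, zpow_natCast, ha, one_zpow, one_mul]
    _ = a := by rw [hbezout, zpow_one]

lemma pow_mul_eq_one_of_pow_eq_one [CommGroup G] {a b : G} {m n : ℕ} (ha : a ^ m = 1)
    (hb : b ^ n = 1) : (a * b) ^ (m * n) = 1 := by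
  rw [mul_pow, pow_mul, ha, one_pow, one_mul, mul_comm, pow_mul, hb, one_pow]

lemma enhancedPowerGraph_adj_of_coprime [CommGroup G] {x y : G} {m n : ℕ} (hx : x ^ m = 1)
    (hy : y ^ n = 1) (hmn : m.Coprime n) (hxy : x ≠ y) : (enhancedPowerGraph G).Adj x y :=
  ⟨hxy, x * y, (Commute.all x y).mem_zpowers_mul_of_coprime hx hy hmn,
    mul_comm y x ▸ (Commute.all y x).mem_zpowers_mul_of_coprime hy hx hmn.symm⟩

lemma enhancedPowerGraph_adj_mul_mul [CommGroup G] {p q r : G} {l m n : ℕ} (hp : p ^ l = 1)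
    (hq : q ^ m = 1) (hr : r ^ n = 1) (hlm : l.Coprime m) (hln : l.Coprime n)
    (hmn : m.Coprime n) (hne : p * q ≠ p * r) : (enhancedPowerGraph G).Adj (p * q) (p * r) :=
  ⟨hne, p * q * r,
    (Commute.all _ _).mem_zpowers_mul_of_coprime (pow_mul_eq_one_of_pow_eq_one hp hq) hr
      (Nat.Coprime.mul_left hln hmn),
    mul_right_comm p r q ▸ (Commute.all _ _).mem_zpowers_mul_of_coprime
      (pow_mul_eq_one_of_pow_eq_one hp hr) hq (Nat.Coprime.mul_left hlm hmn.symm)⟩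

lemma not_ofAdd_one_zero_and_ofAdd_zero_one_mem_zpowers {R : Type*} [CommRing R] [Nontrivial R]
    (w : Multiplicative (R × R)) :
    ¬ (Multiplicative.ofAdd ((1 : R), (0 : R)) ∈ Subgroup.zpowers w ∧
      Multiplicative.ofAdd ((0 : R), (1 : R)) ∈ Subgroup.zpowers w) := by
  obtain ⟨⟨w₁, w₂⟩, rfl⟩ : ∃ p, Multiplicative.ofAdd p = w := ⟨w.toAdd, rfl⟩
  simp only [Subgroup.mem_zpowers_iff, ← ofAdd_zsmul, EmbeddingLike.apply_eq_iff_eq,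
    Prod.smul_mk, Prod.mk.injEq, zsmul_eq_mul]
  rintro ⟨⟨m, hm₁, hm₂⟩, ⟨k, -, hk₂⟩⟩
  exact one_ne_zero (by linear_combination -(k * w₂) * hm₁ + k * w₁ * hm₂ - hk₂ : (1 : R) = 0)

lemma not_enhancedPowerGraph_adj_of_map [Group G] {R : Type*} [CommRing R] [Nontrivial R]
    (φ : G →* Multiplicative (R × R)) {x y : G} (hx : φ x = Multiplicative.ofAdd (1, 0))
    (hy : φ y = Multiplicative.ofAdd (0, 1)) : ¬ (enhancedPowerGraph G).Adj x y := by
  rintro ⟨-, z, hxz, hyz⟩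
  refine not_ofAdd_one_zero_and_ofAdd_zero_one_mem_zpowers (φ z) ⟨?_, ?_⟩
  · rw [← hx, ← MonoidHom.map_zpowers]
    exact Subgroup.mem_map_of_mem φ hxz
  · rw [← hy, ← MonoidHom.map_zpowers]
    exact Subgroup.mem_map_of_mem φ hyz

end EnhancedPowerGraph

def proj₂ : G18 →* Multiplicative (ZMod 2 × ZMod 2) :=
  AddMonoidHom.toMultiplicative (AddMonoidHom.mk' (fun x => (x.1, x.2.1)) fun _ _ => rfl)

def proj₃ : G18 →* Multiplicative (ZMod 3 × ZMod 3) :=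
  AddMonoidHom.toMultiplicative
    (AddMonoidHom.mk' (fun x => (x.2.2.1, x.2.2.2.1)) fun _ _ => rfl)

def proj₅ : G18 →* Multiplicative (ZMod 5 × ZMod 5) :=
  AddMonoidHom.toMultiplicative
    (AddMonoidHom.mk' (fun x => (x.2.2.2.2.1, x.2.2.2.2.2)) fun _ _ => rfl)

lemma v_adj_succ (i : Fin 5) : (enhancedPowerGraph G18).Adj (v i) (v (i + 1)) := by
  fin_cases i
  · show (enhancedPowerGraph G18).Adj (a₁ * b₁) (b₁ * c₂)
    rw [mul_comm a₁]
    exact enhancedPowerGraph_adj_mul_mul (l := 3) (m := 2) (n := 5) (by decide) (by decide)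
      (by decide) (by norm_num) (by norm_num) (by norm_num) (by decide)
  · exact enhancedPowerGraph_adj_of_coprime (m := 15) (n := 2) (by decide) (by decide)
      (by norm_num) (by decide)
  · exact enhancedPowerGraph_adj_of_coprime (m := 2) (n := 3) (by decide) (by decide)
      (by norm_num) (by decide)
  · exact enhancedPowerGraph_adj_of_coprime (m := 3) (n := 10) (by decide) (by decide)
      (by norm_num) (by decide)
  · exact enhancedPowerGraph_adj_mul_mul (l := 2) (m := 5) (n := 3) (by decide) (by decide)
      (by decide) (by norm_num) (by norm_num) (by norm_num) (by decide)

lemma v_not_adj_add_two (i : Fin 5) : ¬ (enhancedPowerGraph G18).Adj (v i) (v (i + 2)) := by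
  fin_cases i
  · exact not_enhancedPowerGraph_adj_of_map proj₂ rfl rfl
  · exact not_enhancedPowerGraph_adj_of_map proj₃ rfl rfl
  · exact fun h => not_enhancedPowerGraph_adj_of_map proj₂ rfl rfl h.symm
  · exact fun h => not_enhancedPowerGraph_adj_of_map proj₃ rfl rfl h.symm
  · have : Fact (1 < 5) := ⟨by norm_num⟩
    exact not_enhancedPowerGraph_adj_of_map proj₅ rfl rfl

theorem stmt_18 :
    Function.Injective v ∧
    (∀ i j : Fin 5, (enhancedPowerGraph G18).Adj (v i) (v j) ↔ (j = i + 1 ∨ i = j + 1)) ∧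
    ¬ (∀ s : Set G18,
        (SimpleGraph.induce s (enhancedPowerGraph G18)).chromaticNumber =
          ((SimpleGraph.induce s (enhancedPowerGraph G18)).cliqueNum : ℕ∞)) := by
  have hcycle := adj_iff_cycleGraph_five_adj v_adj_succ v_not_adj_add_two
  have hinj : Function.Injective v := injective_of_adj_iff (by decide) hcycle
  refine ⟨hinj, fun i j => ?_, ?_⟩
  · rw [hcycle, cycleGraph_adj, sub_eq_iff_eq_add', sub_eq_iff_eq_add', or_comm]
  · exact not_isPerfect_of_cycleGraph_five_isIndContained ⟨⟨⟨v, hinj⟩, hcycle _ _⟩⟩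
end
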